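/- arXiv:2002.09793 — 2 statements merged into one kernel-verified Lean document; each statement's English description precedes it below -/
import Mathlib

section
/- Let u ∈ C^0(closure of the unit ball B) ∩ C^1_loc(B) with u ≡ 0 on ∂B and |∇u| ∈ L^1(B). Then for every φ ∈ C^1(closure of B) and every j ∈ {1,…,N}, ∫_B (∂_j u) φ dx = −∫_B u (∂_j φ) dx. -/
/-!
Multiply `g := u φ` by a radial cutoff `χ_ε`, equal to `1` on the ball of radius `1 - 2ε` and
vanishing near the sphere, with `|∇χ_ε| ≲ 1/ε`. Since `g χ_ε` is compactly supported in the open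
ball, `∫ (∂_j g) χ_ε = -∫ g ∂_j χ_ε`. As `ε → 0` the left side tends to `∫ ∂_j g` by dominated
convergence, while the right side is bounded by `sup |g|` over the shell `1 - 2ε ≤ |x| < 1` times
`(1/ε) · vol(shell) = O(1)`; since `g` is continuous up to the sphere, where it vanishes, this
supremum tends to `0`. Hence `∫_B ∂_j (u φ) = 0`, which is the claim by the product rule.
-/

open MeasureTheory Metric Filter Topology Set Module Real

namespace Real.smoothTransition

lemma deriv_eq_zero_of_notMem_Icc {t : ℝ} (ht : t ∉ Icc (0 : ℝ) 1) :
    deriv smoothTransition t = 0 := by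
  have : smoothTransition =ᶠ[𝓝 t] fun _ => smoothTransition t := by
    rcases not_and_or.1 ht with h | h
    · filter_upwards [Iio_mem_nhds (not_le.1 h)] with s hs
      rw [zero_of_nonpos hs.le, zero_of_nonpos (not_le.1 h).le]
    · filter_upwards [Ioi_mem_nhds (not_le.1 h)] with s hs
      rw [one_of_one_le hs.le, one_of_one_le (not_le.1 h).le]
  rw [this.deriv_eq, deriv_const]

lemma exists_abs_deriv_le : ∃ C, ∀ t, |deriv smoothTransition t| ≤ C :=
  ((smoothTransition.contDiff (n := 1)).continuous_deriv le_rfl).bounded_above_of_compact_support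
    (HasCompactSupport.intro isCompact_Icc fun _ => deriv_eq_zero_of_notMem_Icc)

end Real.smoothTransition

section Cutoff

variable {E : Type*} [NormedAddCommGroup E]

/-- Equal to `1` where `‖x‖² ≤ 1 - 2ε` and to `0` where `‖x‖² ≥ 1 - ε`; using `‖x‖²` rather than
`‖x‖` makes it smooth at the origin. -/
noncomputable def ballCutoff (ε : ℝ) (x : E) : ℝ :=
  smoothTransition ((1 - ε - ‖x‖ ^ 2) / ε)

lemma ballCutoff_eq_one {ε : ℝ} (hε : 0 < ε) {x : E} (hx : ‖x‖ ^ 2 ≤ 1 - 2 * ε) :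
    ballCutoff ε x = 1 :=
  smoothTransition.one_of_one_le <| by rw [le_div_iff₀ hε]; linarith

lemma ballCutoff_eq_zero {ε : ℝ} (hε : 0 < ε) {x : E} (hx : 1 - ε ≤ ‖x‖ ^ 2) :
    ballCutoff ε x = 0 :=
  smoothTransition.zero_of_nonpos <| div_nonpos_of_nonpos_of_nonneg (by linarith) hε.le

lemma abs_ballCutoff_le_one (ε : ℝ) (x : E) : |ballCutoff ε x| ≤ 1 :=
  abs_le.2 ⟨(neg_nonpos.2 zero_le_one).trans (smoothTransition.nonneg _), smoothTransition.le_one _⟩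

lemma tsupport_ballCutoff_subset {ε : ℝ} (hε : 0 < ε) :
    tsupport (ballCutoff (E := E) ε) ⊆ {x | ‖x‖ ^ 2 ≤ 1 - ε} :=
  closure_minimal (fun _ hx => not_lt.1 fun h => hx (ballCutoff_eq_zero hε h.le))
    (isClosed_le (by fun_prop) continuous_const)

lemma tsupport_ballCutoff_subset_ball {ε : ℝ} (hε : 0 < ε) :
    tsupport (ballCutoff (E := E) ε) ⊆ ball 0 1 := fun x hx => by
  have : ‖x‖ ^ 2 ≤ 1 - ε := tsupport_ballCutoff_subset hε hx
  exact mem_ball_zero_iff.2 <| (sq_lt_one_iff₀ (norm_nonneg x)).1 (by linarith)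

lemma hasCompactSupport_ballCutoff [ProperSpace E] {ε : ℝ} (hε : 0 < ε) :
    HasCompactSupport (ballCutoff (E := E) ε) :=
  (isCompact_closedBall 0 1).of_isClosed_subset (isClosed_tsupport _)
    ((tsupport_ballCutoff_subset_ball hε).trans ball_subset_closedBall)

variable [InnerProductSpace ℝ E]

lemma contDiff_ballCutoff (ε : ℝ) : ContDiff ℝ 1 (ballCutoff (E := E) ε) :=
  smoothTransition.contDiff.comp ((contDiff_const.sub (contDiff_norm_sq ℝ)).div_const ε)

lemma hasFDerivAt_ballCutoff (ε : ℝ) (x : E) :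
    HasFDerivAt (ballCutoff ε)
      ((deriv smoothTransition ((1 - ε - ‖x‖ ^ 2) / ε) * (-2 / ε)) • innerSL ℝ x) x := by
  have hq : HasFDerivAt (fun y : E => (1 - ε - ‖y‖ ^ 2) / ε) ((-2 / ε) • innerSL ℝ x) x := by
    simp_rw [div_eq_inv_mul _ ε]
    refine (((hasFDerivAt_const (1 - ε) x).sub
      (hasStrictFDerivAt_norm_sq x).hasFDerivAt).const_mul ε⁻¹).congr_fderiv ?_
    ext y
    simp
    ring
  have hη := ((smoothTransition.contDiff (n := 1)).differentiable one_ne_zero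
    ((1 - ε - ‖x‖ ^ 2) / ε)).hasDerivAt
  rw [← smul_smul]
  exact hη.comp_hasFDerivAt x hq

lemma norm_fderiv_ballCutoff_le {C : ℝ} (hC : ∀ t, |deriv smoothTransition t| ≤ C)
    {ε : ℝ} (hε : 0 < ε) (x : E) : ‖fderiv ℝ (ballCutoff ε) x‖ ≤ C * (2 / ε) * ‖x‖ := by
  rw [(hasFDerivAt_ballCutoff ε x).fderiv, norm_smul, innerSL_apply_norm, norm_mul,
    Real.norm_eq_abs, Real.norm_eq_abs, abs_div, abs_neg, abs_two, abs_of_pos hε]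
  gcongr
  exact hC _

lemma norm_fderiv_ballCutoff_apply_le {C : ℝ} (hC : ∀ t, |deriv smoothTransition t| ≤ C)
    {ε : ℝ} (hε : 0 < ε) {x : E} (hx : ‖x‖ ≤ 1) (v : E) :
    ‖fderiv ℝ (ballCutoff ε) x v‖ ≤ C * (2 / ε) * ‖v‖ := by
  have hC0 : 0 ≤ C := (abs_nonneg _).trans (hC 0)
  calc ‖fderiv ℝ (ballCutoff ε) x v‖ ≤ ‖fderiv ℝ (ballCutoff ε) x‖ * ‖v‖ :=
        (fderiv ℝ (ballCutoff ε) x).le_opNorm v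
    _ ≤ C * (2 / ε) * 1 * ‖v‖ := by
        gcongr
        exact (norm_fderiv_ballCutoff_le hC hε x).trans (by gcongr)
    _ = C * (2 / ε) * ‖v‖ := by rw [mul_one]

lemma fderiv_ballCutoff_eq_zero {ε : ℝ} (hε : 0 < ε) {x : E} (hx : ‖x‖ < 1 - 2 * ε) :
    fderiv ℝ (ballCutoff ε) x = 0 := by
  rw [(hasFDerivAt_ballCutoff ε x).fderiv, smoothTransition.deriv_eq_zero_of_notMem_Icc, zero_mul,
    zero_smul]
  rw [mem_Icc, not_and_or, not_le, not_le, lt_div_iff₀ hε]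
  right
  nlinarith [norm_nonneg x]

end Cutoff

lemma exists_lt_forall_abs_lt_of_eq_zero_on_sphere {X : Type*} [PseudoMetricSpace X]
    [ProperSpace X] {g : X → ℝ} {a : X} {R : ℝ} (hg : ContinuousOn g (closedBall a R))
    (hg0 : ∀ x ∈ sphere a R, g x = 0) {δ : ℝ} (hδ : 0 < δ) :
    ∃ r < R, ∀ x ∈ closedBall a R, r ≤ dist x a → |g x| < δ := by
  set K := closedBall a R ∩ g ⁻¹' {y | δ ≤ |y|}
  have hK : IsClosed K :=
    hg.preimage_isClosed_of_isClosed isClosed_closedBall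
      (isClosed_le continuous_const continuous_abs)
  have hKR : K ⊆ ball a R := fun x ⟨hxR, hxδ⟩ => by
    refine lt_of_le_of_ne (mem_closedBall.1 hxR) fun h => ?_
    have : δ ≤ |g x| := hxδ
    rw [hg0 x (mem_sphere.2 h), abs_zero] at this
    linarith
  obtain ⟨r, hrR, hKr⟩ := exists_lt_subset_ball hK hKR
  exact ⟨r, hrR, fun x hx hrx => not_le.1 fun hxδ => (hKr ⟨hx, hxδ⟩).not_ge hrx⟩

lemma measureReal_ball_sdiff_ball_le {E : Type*} [NormedAddCommGroup E] [NormedSpace ℝ E]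
    [FiniteDimensional ℝ E] [MeasurableSpace E] [BorelSpace E] (μ : Measure E)
    [μ.IsAddHaarMeasure] (x : E) {r : ℝ} (hr : 0 < r) (hr1 : r ≤ 1) :
    μ.real (ball x 1 \ ball x r) ≤ finrank ℝ E * (1 - r) * μ.real (ball (0 : E) 1) := by
  have hball (s : ℝ) (hs : 0 < s) :
      μ.real (ball x s) = s ^ finrank ℝ E * μ.real (ball (0 : E) 1) := by
    rw [measureReal_def, Measure.addHaar_ball_of_pos μ x hs, ENNReal.toReal_mul,
      ENNReal.toReal_ofReal (by positivity), measureReal_def]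
  have bernoulli := one_add_mul_le_pow (show (-2 : ℝ) ≤ r - 1 by linarith) (finrank ℝ E)
  rw [add_sub_cancel] at bernoulli
  rw [measureReal_sdiff (ball_subset_ball hr1) measurableSet_ball measure_ball_lt_top.ne,
    hball 1 one_pos, hball r hr, one_pow, one_mul]
  nlinarith [measureReal_nonneg (μ := μ) (s := ball (0 : E) 1)]

lemma integrableOn_mul_fderiv_apply {E : Type*} [NormedAddCommGroup E] [NormedSpace ℝ E]
    [MeasurableSpace E] [OpensMeasurableSpace E] [SecondCountableTopology E] {μ : Measure E}
    [IsFiniteMeasureOnCompacts μ] {U s : Set E} (hU : IsOpen U) (hUs : U ⊆ s) (hs : IsCompact s)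
    (hs' : UniqueDiffOn ℝ s) {u φ : E → ℝ} (hu : ContinuousOn u s) (hφ : ContDiffOn ℝ 1 φ s)
    (v : E) : IntegrableOn (fun x => u x * fderiv ℝ φ x v) U μ := by
  have hcont : ContinuousOn (fun x => u x * fderivWithin ℝ φ s x v) s :=
    hu.mul ((hφ.continuousOn_fderivWithin hs' le_rfl).clm_apply continuousOn_const)
  refine ((hcont.integrableOn_compact hs).mono_set hUs).congr_fun (fun x hx => ?_)
    hU.measurableSet
  dsimp only
  rw [fderivWithin_of_mem_nhds (mem_of_superset (hU.mem_nhds hx) hUs)]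

section IntegrationByParts

variable {E : Type*} [NormedAddCommGroup E] [NormedSpace ℝ E] [FiniteDimensional ℝ E]
  [MeasurableSpace E] [BorelSpace E] (μ : Measure E) [μ.IsAddHaarMeasure]

theorem setIntegral_fderiv_mul_eq_neg_mul_fderiv {U : Set E} (hU : IsOpen U) {g χ : E → ℝ}
    {v : E} (hg : DifferentiableOn ℝ g U) (hg' : IntegrableOn (fun x => fderiv ℝ g x v) U μ)
    (hχ : ContDiff ℝ 1 χ) (hχc : HasCompactSupport χ) (hχU : tsupport χ ⊆ U) :
    ∫ x in U, fderiv ℝ g x v * χ x ∂μ = -∫ x in U, g x * fderiv ℝ χ x v ∂μ := by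
  have hgK : ContinuousOn g (tsupport χ) := hg.continuousOn.mono hχU
  have hDχ : Continuous fun x => fderiv ℝ χ x v :=
    (hχ.continuous_fderiv one_ne_zero).clm_apply continuous_const
  have hDχK : Function.support (fun x => fderiv ℝ χ x v) ⊆ tsupport χ := fun x hx =>
    support_fderiv_subset ℝ fun h : fderiv ℝ χ x = 0 => hx (by simp [h])
  have h₁ : Function.support (fun x => fderiv ℝ g x v * χ x) ⊆ tsupport χ :=
    (Function.support_mul_subset_right _ _).trans subset_closure
  have h₂ : Function.support (fun x => g x * fderiv ℝ χ x v) ⊆ tsupport χ :=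
    (Function.support_mul_subset_right _ _).trans hDχK
  have h₃ : Function.support (fun x => g x * χ x) ⊆ tsupport χ :=
    (Function.support_mul_subset_right _ _).trans subset_closure
  have ibp := integral_mul_fderiv_eq_neg_fderiv_mul_of_integrable (μ := μ) (v := v)
    ((integrableOn_iff_integrable_of_support_subset h₁).1
      ((hg'.mono_set hχU).mul_continuousOn hχ.continuous.continuousOn hχc))
    ((integrableOn_iff_integrable_of_support_subset h₂).1
      ((hgK.mul hDχ.continuousOn).integrableOn_compact hχc))
    ((integrableOn_iff_integrable_of_support_subset h₃).1
      ((hgK.mul hχ.continuous.continuousOn).integrableOn_compact hχc))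
    (fun x hx => hg.differentiableAt (hU.mem_nhds (hχU hx)))
    (fun x _ => hχ.differentiable one_ne_zero x)
  have vanish {f : E → ℝ} (hf : Function.support f ⊆ tsupport χ) : ∀ x ∉ U, f x = 0 :=
    fun x hx => Function.notMem_support.1 fun h => hx (hχU (hf h))
  rw [setIntegral_eq_integral_of_forall_compl_eq_zero (vanish h₁),
    setIntegral_eq_integral_of_forall_compl_eq_zero (vanish h₂), ibp, neg_neg]

end IntegrationByParts

section UnitBall

variable {E : Type*} [NormedAddCommGroup E] [InnerProductSpace ℝ E] [MeasurableSpace E]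
  [BorelSpace E] (μ : Measure E)

theorem tendsto_setIntegral_mul_ballCutoff {f : E → ℝ} (hf : IntegrableOn f (ball 0 1) μ) :
    Tendsto (fun ε => ∫ x in ball 0 1, f x * ballCutoff ε x ∂μ) (𝓝[>] 0)
      (𝓝 (∫ x in ball 0 1, f x ∂μ)) := by
  refine tendsto_integral_filter_of_dominated_convergence (fun x => ‖f x‖)
    (Eventually.of_forall fun ε =>
      hf.aestronglyMeasurable.mul (contDiff_ballCutoff ε).continuous.aestronglyMeasurable)
    (Eventually.of_forall fun ε => Eventually.of_forall fun x => ?_) hf.norm ?_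
  · rw [norm_mul, Real.norm_eq_abs (ballCutoff ε x)]
    exact mul_le_of_le_one_right (norm_nonneg _) (abs_ballCutoff_le_one ε x)
  · refine ae_restrict_of_forall_mem measurableSet_ball fun x hx => tendsto_const_nhds.congr' ?_
    have hx2 : ‖x‖ ^ 2 < 1 := (sq_lt_one_iff₀ (norm_nonneg x)).2 (mem_ball_zero_iff.1 hx)
    filter_upwards [self_mem_nhdsWithin,
      nhdsWithin_le_nhds (Iio_mem_nhds (show 0 < (1 - ‖x‖ ^ 2) / 2 by linarith))] with ε hε hεx
    rw [ballCutoff_eq_one hε (by linarith [show ε < (1 - ‖x‖ ^ 2) / 2 from hεx]), mul_one]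

variable [FiniteDimensional ℝ E] [μ.IsAddHaarMeasure]

theorem norm_setIntegral_mul_fderiv_ballCutoff_le {C : ℝ}
    (hC : ∀ t, |deriv smoothTransition t| ≤ C) {g : E → ℝ} {δ ε : ℝ} (hδ : 0 ≤ δ) (hε : 0 < ε)
    (hε1 : 2 * ε < 1) (hg : ∀ x ∈ ball (0 : E) 1, 1 - 2 * ε ≤ ‖x‖ → |g x| ≤ δ) (v : E) :
    ‖∫ x in ball 0 1, g x * fderiv ℝ (ballCutoff ε) x v ∂μ‖ ≤
      δ * (4 * C * ‖v‖ * finrank ℝ E * μ.real (ball (0 : E) 1)) := by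
  have hC0 : 0 ≤ C := (abs_nonneg _).trans (hC 0)
  set shell := ball (0 : E) 1 \ ball 0 (1 - 2 * ε)
  have hvanish : ∀ x ∈ ball (0 : E) 1 \ shell, g x * fderiv ℝ (ballCutoff ε) x v = 0 := by
    rintro x ⟨hx1, hx2⟩
    have hx : ‖x‖ < 1 - 2 * ε :=
      not_le.1 fun h => hx2 ⟨hx1, by rwa [mem_ball_zero_iff, not_lt]⟩
    simp [fderiv_ballCutoff_eq_zero hε hx]
  have hbound : ∀ x ∈ shell, ‖g x * fderiv ℝ (ballCutoff ε) x v‖ ≤ δ * (C * (2 / ε) * ‖v‖) := by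
    rintro x ⟨hx1, hx2⟩
    rw [mem_ball_zero_iff, not_lt] at hx2
    rw [norm_mul, Real.norm_eq_abs]
    gcongr
    · exact hg x hx1 hx2
    · exact norm_fderiv_ballCutoff_apply_le hC hε (mem_ball_zero_iff.1 hx1).le v
  rw [setIntegral_eq_of_subset_of_forall_sdiff_eq_zero measurableSet_ball sdiff_subset hvanish]
  calc _ ≤ δ * (C * (2 / ε) * ‖v‖) * μ.real shell :=
        norm_setIntegral_le_of_norm_le_const
          ((measure_mono sdiff_subset).trans_lt measure_ball_lt_top) hbound
    _ ≤ δ * (C * (2 / ε) * ‖v‖) * (finrank ℝ E * (1 - (1 - 2 * ε)) * μ.real (ball (0 : E) 1)) := by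
        gcongr
        exact measureReal_ball_sdiff_ball_le μ 0 (by linarith) (by linarith)
    _ = _ := by field_simp; ring

theorem tendsto_setIntegral_mul_fderiv_ballCutoff {g : E → ℝ}
    (hg : ContinuousOn g (closedBall 0 1)) (hg0 : ∀ x ∈ sphere 0 1, g x = 0) (v : E) :
    Tendsto (fun ε => ∫ x in ball 0 1, g x * fderiv ℝ (ballCutoff ε) x v ∂μ) (𝓝[>] 0)
      (𝓝 0) := by
  obtain ⟨C, hC⟩ := smoothTransition.exists_abs_deriv_le
  set K := 4 * C * ‖v‖ * finrank ℝ E * μ.real (ball (0 : E) 1)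
  have hK : 0 ≤ K := by have := (abs_nonneg _).trans (hC 0); positivity
  rw [Metric.tendsto_nhds]
  intro ρ hρ
  obtain ⟨r, hr1, hr⟩ := exists_lt_forall_abs_lt_of_eq_zero_on_sphere hg hg0
    (show 0 < ρ / (K + 1) by positivity)
  filter_upwards [self_mem_nhdsWithin, nhdsWithin_le_nhds
    (Iio_mem_nhds (show 0 < (1 - max r 0) / 2 by linarith [max_lt hr1 one_pos]))]
    with ε (hε : 0 < ε) (hεr : ε < (1 - max r 0) / 2)
  have hgε : ∀ x ∈ ball (0 : E) 1, 1 - 2 * ε ≤ ‖x‖ → |g x| ≤ ρ / (K + 1) := fun x hx hxε =>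
    (hr x (ball_subset_closedBall hx) (by rw [dist_zero_right]; linarith [le_max_left r 0])).le
  rw [dist_zero_right]
  calc _ ≤ ρ / (K + 1) * K := norm_setIntegral_mul_fderiv_ballCutoff_le μ hC (by positivity) hε
        (by linarith [le_max_right r 0]) hgε v
    _ < ρ := by
        rw [div_mul_eq_mul_div, div_lt_iff₀ (by positivity)]
        nlinarith

theorem setIntegral_fderiv_eq_zero_of_eq_zero_on_sphere {g : E → ℝ}
    (hg : ContinuousOn g (closedBall 0 1)) (hgd : DifferentiableOn ℝ g (ball 0 1))
    (hg0 : ∀ x ∈ sphere 0 1, g x = 0) {v : E}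
    (hg' : IntegrableOn (fun x => fderiv ℝ g x v) (ball 0 1) μ) :
    ∫ x in ball 0 1, fderiv ℝ g x v ∂μ = 0 := by
  have hibp : ∀ᶠ ε in 𝓝[>] 0, -∫ x in ball 0 1, g x * fderiv ℝ (ballCutoff ε) x v ∂μ =
      ∫ x in ball 0 1, fderiv ℝ g x v * ballCutoff ε x ∂μ := by
    filter_upwards [self_mem_nhdsWithin] with ε hε
    exact (setIntegral_fderiv_mul_eq_neg_mul_fderiv μ isOpen_ball hgd hg' (contDiff_ballCutoff ε)
      (hasCompactSupport_ballCutoff hε) (tsupport_ballCutoff_subset_ball hε)).symm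
  have hlim := (tendsto_setIntegral_mul_fderiv_ballCutoff μ hg hg0 v).neg
  rw [neg_zero] at hlim
  exact tendsto_nhds_unique (tendsto_setIntegral_mul_ballCutoff μ hg') (hlim.congr' hibp)

end UnitBall

theorem stmt2_general (N : ℕ)
    (u φ : EuclideanSpace ℝ (Fin N) → ℝ)
    (hu_cont : ContinuousOn u (closedBall 0 1))
    (hu_diff : ContDiffOn ℝ 1 u (ball 0 1))
    (hu_bd : ∀ x ∈ sphere (0 : EuclideanSpace ℝ (Fin N)) 1, u x = 0)
    (hu_grad : IntegrableOn (fun x => ‖fderiv ℝ u x‖) (ball 0 1))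
    (hφ : ContDiffOn ℝ 1 φ (closedBall 0 1)) (j : Fin N) :
    ∫ x in ball (0 : EuclideanSpace ℝ (Fin N)) 1,
        fderiv ℝ u x (EuclideanSpace.single j 1) * φ x
      = - ∫ x in ball (0 : EuclideanSpace ℝ (Fin N)) 1,
          u x * fderiv ℝ φ x (EuclideanSpace.single j 1) := by
  set v : EuclideanSpace ℝ (Fin N) := EuclideanSpace.single j 1
  have hud : DifferentiableOn ℝ u (ball 0 1) := hu_diff.differentiableOn one_ne_zero
  have hφd : DifferentiableOn ℝ φ (ball 0 1) :=
    (hφ.differentiableOn one_ne_zero).mono ball_subset_closedBall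
  have hDu : IntegrableOn (fun x => fderiv ℝ u x v) (ball 0 1) :=
    ((integrable_norm_iff (measurable_fderiv ℝ u).aestronglyMeasurable).1
      hu_grad).apply_continuousLinearMap v
  have hA : IntegrableOn (fun x => fderiv ℝ u x v * φ x) (ball 0 1) :=
    hDu.mul_continuousOn_of_subset hφ.continuousOn measurableSet_ball
      (isCompact_closedBall 0 1) ball_subset_closedBall
  have hB : IntegrableOn (fun x => u x * fderiv ℝ φ x v) (ball 0 1) :=
    integrableOn_mul_fderiv_apply isOpen_ball ball_subset_closedBall (isCompact_closedBall 0 1)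
      (uniqueDiffOn_convex (convex_closedBall 0 1)
        ⟨0, ball_subset_interior_closedBall (mem_ball_self one_pos)⟩) hu_cont hφ v
  have hprod : EqOn (fun x => fderiv ℝ (fun y => u y * φ y) x v)
      (fun x => fderiv ℝ u x v * φ x + u x * fderiv ℝ φ x v) (ball 0 1) := fun x hx => by
    dsimp only
    rw [fderiv_fun_mul (hud.differentiableAt (isOpen_ball.mem_nhds hx))
      (hφd.differentiableAt (isOpen_ball.mem_nhds hx))]
    simp only [add_apply, smul_apply, smul_eq_mul]
    ring
  have hzero := setIntegral_fderiv_eq_zero_of_eq_zero_on_sphere volume (g := fun x => u x * φ x)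
    (hu_cont.mul hφ.continuousOn) (hud.mul hφd) (fun x hx => by simp [hu_bd x hx])
    ((hA.add hB).congr_fun hprod.symm measurableSet_ball)
  rw [setIntegral_congr_fun measurableSet_ball hprod, integral_add hA hB] at hzero
  linarith

theorem stmt2 (N : ℕ) (hN : 1 ≤ N)
    (u φ : EuclideanSpace ℝ (Fin N) → ℝ)
    (hu_cont : ContinuousOn u (closedBall 0 1))
    (hu_diff : ContDiffOn ℝ 1 u (ball 0 1))
    (hu_bd : ∀ x ∈ sphere (0 : EuclideanSpace ℝ (Fin N)) 1, u x = 0)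
    (hu_grad : IntegrableOn (fun x => ‖fderiv ℝ u x‖) (ball 0 1))
    (hφ : ContDiffOn ℝ 1 φ (closedBall 0 1)) (j : Fin N) :
    ∫ x in ball (0 : EuclideanSpace ℝ (Fin N)) 1,
        fderiv ℝ u x (EuclideanSpace.single j 1) * φ x
      = - ∫ x in ball (0 : EuclideanSpace ℝ (Fin N)) 1,
          u x * fderiv ℝ φ x (EuclideanSpace.single j 1) :=
  stmt2_general N u φ hu_cont hu_diff hu_bd hu_grad hφ j
end

section
/- Let s ∈ (0,1), Ω' ⊂⊂ Ω'' ⊂⊂ Ω ⊂ ℝ^N open and bounded, v : ℝ^N → ℝ measurable with finite Gagliardo seminorm [v]_{s,Ω''} and finite weighted norm ‖v‖_{L^1_s} := ∫_{ℝ^N} |v(x)|/(1+|x|^{N+2s}) dx and v ∈ L^2(Ω'), and φ : ℝ^N → ℝ measurable with supp φ ⊂ Ω' and [φ]_{s,Ω''} < ∞, φ ∈ L^2(Ω'). Then there exist constants c_1, c_2 > 0 depending only on Ω', Ω'', N, s such that (1/2)∫∫_{ℝ^N×ℝ^N} |v(x)−v(y)||φ(x)−φ(y)|/|x−y|^{N+2s}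 dx dy ≤ [v]_{s,Ω''}[φ]_{s,Ω''} + c_1 ‖v‖_{L^2(Ω')}‖φ‖_{L^2(Ω')} + c_2 ‖φ‖_{L^1(Ω')}‖v‖_{L^1_s}. -/
/-!
Split `ℝᴺ × ℝᴺ` into `Ω'' × Ω''` and its complement. On `Ω'' × Ω''` the Cauchy–Schwarz inequality
bounds the form by `[v]_{s,Ω''} [φ]_{s,Ω''}`. Off `Ω'' × Ω''` the integrand vanishes unless one
point lies in `Ω' ⊇ supp φ` and the other outside `Ω''`; by symmetry it suffices to take `x ∈ Ω'`,
`y ∉ Ω''`, counted twice. Then `|x - y| ≥ δ := dist(Ω', Ω''ᶜ) > 0` and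
`|v x - v y| |φ x| ≤ |v x| |φ x| + |v y| |φ x|`. The first term is integrated against the finite
tail `∫_{|z| ≥ δ} |z|^{-N-2s} dz` and closed by Hölder on `Ω'`; for the second, `Ω'` is bounded,
so `|x - y|^{-N-2s} ≤ C (1 + |y|^{N+2s})⁻¹`, which produces `‖φ‖_{L¹(Ω')} ‖v‖_{L¹_s}`.
-/

open MeasureTheory
open scoped ENNReal

/-- Gagliardo seminorm (squared) of `w` over `U`. -/
noncomputable def gagliardoSq (N : ℕ) (s : ℝ) (w : EuclideanSpace ℝ (Fin N) → ℝ)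
    (U : Set (EuclideanSpace ℝ (Fin N))) : ℝ≥0∞ :=
  (1/2 : ℝ≥0∞) * ∫⁻ x in U, ∫⁻ y in U,
    ENNReal.ofReal (|w x - w y| ^ 2 / ‖x - y‖ ^ ((N:ℝ) + 2*s))

open Metric Set Module

theorem exists_pos_forall_le_dist_of_closure_subset {X : Type*} [MetricSpace X] {T S : Set X}
    (hT : IsCompact (closure T)) (hS : IsOpen S) (hTS : closure T ⊆ S) :
    ∃ δ > 0, ∀ x ∈ T, ∀ y ∉ S, δ ≤ dist x y := by
  obtain ⟨δ, hδ, hthick⟩ := hT.exists_thickening_subset_open hS hTS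
  refine ⟨δ, hδ, fun x hx y hy => not_lt.1 fun hxy => hy (hthick ?_)⟩
  exact mem_thickening_iff.2 ⟨x, subset_closure hx, by rwa [dist_comm]⟩

theorem lintegral_ofReal_abs_mul_le_L2_mul_L2 {α : Type*} [MeasurableSpace α] (μ : Measure α)
    {f g : α → ℝ}
    (hf : AEMeasurable f μ) (hg : AEMeasurable g μ) :
    ∫⁻ a, ENNReal.ofReal (|f a| * |g a|) ∂μ ≤
      (∫⁻ a, ENNReal.ofReal (|f a| ^ 2) ∂μ) ^ (1/2 : ℝ) *
        (∫⁻ a, ENNReal.ofReal (|g a| ^ 2) ∂μ) ^ (1/2 : ℝ) := by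
  have hsq : ∀ t : ℝ, ENNReal.ofReal (|t| ^ 2) = ENNReal.ofReal |t| ^ (2 : ℝ) := fun t => by
    rw [ENNReal.ofReal_rpow_of_nonneg (abs_nonneg t) zero_le_two, Real.rpow_two]
  simp_rw [ENNReal.ofReal_mul (abs_nonneg _), hsq]
  exact ENNReal.lintegral_mul_le_Lp_mul_Lq μ Real.HolderConjugate.two_two
    hf.abs.ennreal_ofReal hg.abs.ennreal_ofReal

theorem ENNReal.mul_rpow_half_mul_rpow_half (c a b : ℝ≥0∞) :
    c * (a ^ (1/2 : ℝ) * b ^ (1/2 : ℝ)) = (c * a) ^ (1/2 : ℝ) * (c * b) ^ (1/2 : ℝ) := by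
  have hc : c = c ^ (1/2 : ℝ) * c ^ (1/2 : ℝ) := by
    rw [← ENNReal.rpow_add_of_nonneg _ _ (by norm_num) (by norm_num)]
    norm_num
  rw [ENNReal.mul_rpow_of_nonneg _ _ (by norm_num), ENNReal.mul_rpow_of_nonneg _ _ (by norm_num)]
  nth_rw 1 [hc]
  ring

section Symmetrization

variable {X : Type*} [MeasurableSpace X] {μ : Measure X} [SFinite μ]

theorem lintegral_lintegral_le_of_symm {f : X → X → ℝ≥0∞} (hf : Measurable (Function.uncurry f))
    (hsymm : ∀ x y, f x y = f y x) {S T : Set X} (hS : MeasurableSet S) (hT : MeasurableSet T)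
    (hTS : T ⊆ S) (hf0 : ∀ x ∉ T, ∀ y ∉ T, f x y = 0) :
    ∫⁻ x, ∫⁻ y, f x y ∂μ ∂μ ≤
      ∫⁻ x in S, ∫⁻ y in S, f x y ∂μ ∂μ + 2 * ∫⁻ x in T, ∫⁻ y in Sᶜ, f x y ∂μ ∂μ := by
  set F := Function.uncurry f
  have hA : MeasurableSet (T ×ˢ Sᶜ) := hT.prod hS.compl
  have hA' : MeasurableSet (Sᶜ ×ˢ T) := hS.compl.prod hT
  have hcover : ∀ z ∈ (S ×ˢ S)ᶜ, F z ≤ (T ×ˢ Sᶜ).indicator F z + (Sᶜ ×ˢ T).indicator F z := by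
    rintro ⟨x, y⟩ hxy
    simp only [mem_compl_iff, mem_prod, not_and_or] at hxy
    by_cases hx : x ∈ T
    · have hy : y ∉ S := hxy.resolve_left (not_not.2 (hTS hx))
      simp [indicator, hx, hy, F]
    by_cases hy : y ∈ T
    · have hx' : x ∉ S := hxy.resolve_right (not_not.2 (hTS hy))
      simp [indicator, hy, hx', F]
    · simp [F, hf0 x hx y hy]
  have hswap : ∫⁻ z in Sᶜ ×ˢ T, F z ∂μ.prod μ = ∫⁻ z in T ×ˢ Sᶜ, F z ∂μ.prod μ := by
    rw [← Measure.prod_restrict, ← Measure.prod_restrict, ← lintegral_prod_swap]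
    exact lintegral_congr fun z => hsymm z.2 z.1
  have hoff : ∫⁻ z in (S ×ˢ S)ᶜ, F z ∂μ.prod μ ≤ 2 * ∫⁻ z in T ×ˢ Sᶜ, F z ∂μ.prod μ :=
    calc ∫⁻ z in (S ×ˢ S)ᶜ, F z ∂μ.prod μ
        ≤ ∫⁻ z in (S ×ˢ S)ᶜ, (T ×ˢ Sᶜ).indicator F z + (Sᶜ ×ˢ T).indicator F z ∂μ.prod μ :=
          setLIntegral_mono ((hf.indicator hA).add (hf.indicator hA')) hcover
      _ ≤ ∫⁻ z, (T ×ˢ Sᶜ).indicator F z + (Sᶜ ×ˢ T).indicator F z ∂μ.prod μ :=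
          setLIntegral_le_lintegral _ _
      _ = 2 * ∫⁻ z in T ×ˢ Sᶜ, F z ∂μ.prod μ := by
          rw [lintegral_add_left (hf.indicator hA), lintegral_indicator hA, lintegral_indicator hA',
            hswap, two_mul]
  calc ∫⁻ x, ∫⁻ y, f x y ∂μ ∂μ
      = ∫⁻ z in S ×ˢ S, F z ∂μ.prod μ + ∫⁻ z in (S ×ˢ S)ᶜ, F z ∂μ.prod μ := by
        rw [lintegral_add_compl _ (hS.prod hS), lintegral_prod _ hf.aemeasurable]
        rfl
    _ ≤ ∫⁻ z in S ×ˢ S, F z ∂μ.prod μ + 2 * ∫⁻ z in T ×ˢ Sᶜ, F z ∂μ.prod μ := by gcongr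
    _ = _ := by
        rw [setLIntegral_prod _ hf.aemeasurable.restrict,
          setLIntegral_prod _ hf.aemeasurable.restrict]
        rfl

end Symmetrization

theorem rpow_le_mul_rpow_of_le_add {a t R δ p : ℝ} (ha : 0 ≤ a) (hR : 0 ≤ R) (hδ : 0 < δ)
    (hδt : δ ≤ t) (hp : 0 ≤ p) (h : a ≤ R + t) : a ^ p ≤ (R / δ + 1) ^ p * t ^ p := by
  have hRt : R ≤ R / δ * t := by
    rw [div_mul_eq_mul_div, le_div_iff₀ hδ]
    exact mul_le_mul_of_nonneg_left hδt hR
  rw [← Real.mul_rpow (by positivity) (hδ.le.trans hδt)]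
  exact Real.rpow_le_rpow ha (by linarith) hp

theorem one_div_rpow_le_div_one_add_rpow {E : Type*} [SeminormedAddGroup E] {x y : E}
    {R δ p : ℝ} (hp : 0 < p) (hδ : 0 < δ) (hx : ‖x‖ ≤ R) (hxy : δ ≤ ‖x - y‖) :
    1 / ‖x - y‖ ^ p ≤ (δ ^ (-p) + (R / δ + 1) ^ p) / (1 + ‖y‖ ^ p) := by
  have hxy0 : 0 < ‖x - y‖ ^ p := Real.rpow_pos_of_pos (hδ.trans_le hxy) p
  have hone : 1 ≤ δ ^ (-p) * ‖x - y‖ ^ p := by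
    rw [Real.rpow_neg hδ.le, inv_mul_eq_div, one_le_div (Real.rpow_pos_of_pos hδ p)]
    exact Real.rpow_le_rpow hδ.le hxy hp.le
  have hy : ‖y‖ ^ p ≤ (R / δ + 1) ^ p * ‖x - y‖ ^ p := by
    refine rpow_le_mul_rpow_of_le_add (norm_nonneg y) ((norm_nonneg x).trans hx) hδ hxy hp.le ?_
    have := norm_le_norm_add_norm_sub' y x
    rw [norm_sub_rev] at this
    linarith
  rw [div_le_div_iff₀ hxy0 (by positivity)]
  linarith

section Kernel

variable {E : Type*} [NormedAddCommGroup E] [MeasurableSpace E] [BorelSpace E] {μ : Measure E}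

theorem lintegral_compl_ball_one_div_rpow_eq [μ.IsAddRightInvariant] (x : E) (p δ : ℝ) :
    ∫⁻ y in (ball x δ)ᶜ, ENNReal.ofReal (1 / ‖x - y‖ ^ p) ∂μ =
      ∫⁻ z in (ball (0 : E) δ)ᶜ, ENNReal.ofReal (1 / ‖z‖ ^ p) ∂μ := by
  rw [← lintegral_indicator measurableSet_ball.compl,
    ← lintegral_indicator measurableSet_ball.compl]
  conv_rhs => rw [← lintegral_sub_right_eq_self _ x]
  congr 1 with y
  simp only [indicator, mem_compl_iff, mem_ball_iff_norm, sub_zero, norm_sub_rev x y]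

theorem lintegral_compl_ball_one_div_rpow_lt_top [NormedSpace ℝ E] [FiniteDimensional ℝ E]
    [μ.IsAddHaarMeasure] {p δ : ℝ} (hδ : 0 < δ) (hp : (finrank ℝ E : ℝ) < p) :
    ∫⁻ z in (ball (0 : E) δ)ᶜ, ENNReal.ofReal (1 / ‖z‖ ^ p) ∂μ < ⊤ := by
  have hp0 : 0 < p := (Nat.cast_nonneg _).trans_lt hp
  have hbound : ∀ z ∈ (ball (0 : E) δ)ᶜ,
      ENNReal.ofReal (1 / ‖z‖ ^ p) ≤ ENNReal.ofReal ((1 / δ + 1) ^ p * (1 + ‖z‖) ^ (-p)) := by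
    intro z hz
    have hδz : δ ≤ ‖z‖ := by simpa using hz
    have hz0 : 0 < ‖z‖ ^ p := Real.rpow_pos_of_pos (hδ.trans_le hδz) p
    have h := rpow_le_mul_rpow_of_le_add (by positivity) zero_le_one hδ hδz hp0.le le_rfl
    refine ENNReal.ofReal_le_ofReal ?_
    rw [Real.rpow_neg (by positivity), ← div_eq_mul_inv, div_le_div_iff₀ hz0 (by positivity)]
    linarith
  calc ∫⁻ z in (ball (0 : E) δ)ᶜ, ENNReal.ofReal (1 / ‖z‖ ^ p) ∂μ
      ≤ ∫⁻ z in (ball (0 : E) δ)ᶜ, ENNReal.ofReal ((1 / δ + 1) ^ p * (1 + ‖z‖) ^ (-p)) ∂μ :=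
        setLIntegral_mono (by fun_prop) hbound
    _ ≤ ∫⁻ z, ENNReal.ofReal ((1 / δ + 1) ^ p * (1 + ‖z‖) ^ (-p)) ∂μ :=
        setLIntegral_le_lintegral _ _
    _ < ⊤ := ((integrable_one_add_norm hp).const_mul _).lintegral_lt_top

theorem lintegral_compl_cross_le [μ.IsAddRightInvariant] {p δ R : ℝ} (hp : 0 < p)
    (hδ : 0 < δ) {S : Set E} {x : E} (hx : ‖x‖ ≤ R) (hsep : ∀ y ∉ S, δ ≤ ‖x - y‖)
    {v φ : E → ℝ} (hv : Measurable v) (hφS : ∀ y ∉ S, φ y = 0) :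
    ∫⁻ y in Sᶜ, ENNReal.ofReal (|v x - v y| * |φ x - φ y| / ‖x - y‖ ^ p) ∂μ ≤
      ENNReal.ofReal (|v x| * |φ x|) * ∫⁻ z in (ball (0 : E) δ)ᶜ, ENNReal.ofReal (1 / ‖z‖ ^ p) ∂μ +
        ENNReal.ofReal |φ x| * (ENNReal.ofReal (δ ^ (-p) + (R / δ + 1) ^ p) *
          ∫⁻ y, ENNReal.ofReal (|v y| / (1 + ‖y‖ ^ p)) ∂μ) := by
  have hR : 0 ≤ R := (norm_nonneg x).trans hx
  set C := δ ^ (-p) + (R / δ + 1) ^ p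
  have hC : 0 ≤ C := add_nonneg (Real.rpow_nonneg hδ.le _) (Real.rpow_nonneg (by positivity) _)
  have hpoint : ∀ y ∈ Sᶜ, ENNReal.ofReal (|v x - v y| * |φ x - φ y| / ‖x - y‖ ^ p) ≤
      ENNReal.ofReal (|v x| * |φ x|) * ENNReal.ofReal (1 / ‖x - y‖ ^ p) +
        ENNReal.ofReal |φ x| * (ENNReal.ofReal C * ENNReal.ofReal (|v y| / (1 + ‖y‖ ^ p))) := by
    intro y hy
    have hkernel := one_div_rpow_le_div_one_add_rpow hp hδ hx (hsep y hy)
    rw [← ENNReal.ofReal_mul (by positivity), ← ENNReal.ofReal_mul (by positivity),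
      ← ENNReal.ofReal_mul (by positivity), ← ENNReal.ofReal_add (by positivity) (by positivity)]
    refine ENNReal.ofReal_le_ofReal ?_
    calc |v x - v y| * |φ x - φ y| / ‖x - y‖ ^ p
        ≤ |v x| * |φ x| * (1 / ‖x - y‖ ^ p) + |φ x| * |v y| * (1 / ‖x - y‖ ^ p) := by
          rw [hφS y hy, sub_zero, ← add_mul, mul_one_div]
          gcongr
          nlinarith [abs_sub (v x) (v y), abs_nonneg (φ x)]
      _ ≤ |v x| * |φ x| * (1 / ‖x - y‖ ^ p) + |φ x| * |v y| * (C / (1 + ‖y‖ ^ p)) := by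
          gcongr
      _ = |v x| * |φ x| * (1 / ‖x - y‖ ^ p) + |φ x| * (C * (|v y| / (1 + ‖y‖ ^ p))) := by
          ring
  have hball : Sᶜ ⊆ (ball x δ)ᶜ := fun y hy => by
    rw [mem_compl_iff, mem_ball, not_lt, dist_eq_norm, norm_sub_rev]
    exact hsep y hy
  calc ∫⁻ y in Sᶜ, ENNReal.ofReal (|v x - v y| * |φ x - φ y| / ‖x - y‖ ^ p) ∂μ
      ≤ ∫⁻ y in Sᶜ, (ENNReal.ofReal (|v x| * |φ x|) * ENNReal.ofReal (1 / ‖x - y‖ ^ p) +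
          ENNReal.ofReal |φ x| * (ENNReal.ofReal C * ENNReal.ofReal (|v y| / (1 + ‖y‖ ^ p)))) ∂μ :=
        setLIntegral_mono (by fun_prop) hpoint
    _ = ENNReal.ofReal (|v x| * |φ x|) * ∫⁻ y in Sᶜ, ENNReal.ofReal (1 / ‖x - y‖ ^ p) ∂μ +
          ENNReal.ofReal |φ x| * (ENNReal.ofReal C *
            ∫⁻ y in Sᶜ, ENNReal.ofReal (|v y| / (1 + ‖y‖ ^ p)) ∂μ) := by
        rw [lintegral_add_left (by fun_prop), lintegral_const_mul _ (by fun_prop),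
          lintegral_const_mul _ (by fun_prop), lintegral_const_mul _ (by fun_prop)]
    _ ≤ _ := by
        refine add_le_add (mul_le_mul_right ?_ _) (mul_le_mul_right (mul_le_mul_right ?_ _) _)
        · exact (lintegral_mono_set hball).trans_eq (lintegral_compl_ball_one_div_rpow_eq x p δ)
        · exact setLIntegral_le_lintegral _ _

theorem lintegral_lintegral_compl_cross_le [μ.IsAddRightInvariant] {p δ R : ℝ} (hp : 0 < p)
    (hδ : 0 < δ) {S T : Set E} (hR : ∀ x ∈ T, ‖x‖ ≤ R) (hsep : ∀ x ∈ T, ∀ y ∉ S, δ ≤ ‖x - y‖)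
    {v φ : E → ℝ} (hv : Measurable v) (hφ : Measurable φ) (hφS : ∀ y ∉ S, φ y = 0) :
    ∫⁻ x in T, ∫⁻ y in Sᶜ, ENNReal.ofReal (|v x - v y| * |φ x - φ y| / ‖x - y‖ ^ p) ∂μ ∂μ ≤
      (∫⁻ z in (ball (0 : E) δ)ᶜ, ENNReal.ofReal (1 / ‖z‖ ^ p) ∂μ) *
          ∫⁻ x in T, ENNReal.ofReal (|v x| * |φ x|) ∂μ +
        ENNReal.ofReal (δ ^ (-p) + (R / δ + 1) ^ p) * (∫⁻ x in T, ENNReal.ofReal |φ x| ∂μ) *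
          ∫⁻ y, ENNReal.ofReal (|v y| / (1 + ‖y‖ ^ p)) ∂μ := by
  set K := ∫⁻ z in (ball (0 : E) δ)ᶜ, ENNReal.ofReal (1 / ‖z‖ ^ p) ∂μ
  set C := ENNReal.ofReal (δ ^ (-p) + (R / δ + 1) ^ p)
  set L := ∫⁻ y, ENNReal.ofReal (|v y| / (1 + ‖y‖ ^ p)) ∂μ
  calc ∫⁻ x in T, ∫⁻ y in Sᶜ, ENNReal.ofReal (|v x - v y| * |φ x - φ y| / ‖x - y‖ ^ p) ∂μ ∂μ
      ≤ ∫⁻ x in T, (ENNReal.ofReal (|v x| * |φ x|) * K + ENNReal.ofReal |φ x| * (C * L)) ∂μ :=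
        setLIntegral_mono (by fun_prop) fun x hx =>
          lintegral_compl_cross_le hp hδ (hR x hx) (hsep x hx) hv hφS
    _ = (∫⁻ x in T, ENNReal.ofReal (|v x| * |φ x|) ∂μ) * K +
          (∫⁻ x in T, ENNReal.ofReal |φ x| ∂μ) * (C * L) := by
        rw [lintegral_add_left (by fun_prop), lintegral_mul_const _ (by fun_prop),
          lintegral_mul_const _ (by fun_prop)]
    _ = _ := by ring

end Kernel

noncomputable def gagliardoForm (N : ℕ) (s : ℝ) (v φ : EuclideanSpace ℝ (Fin N) → ℝ)
    (U : Set (EuclideanSpace ℝ (Fin N))) : ℝ≥0∞ :=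
  (1/2 : ℝ≥0∞) * ∫⁻ x in U, ∫⁻ y in U,
    ENNReal.ofReal (|v x - v y| * |φ x - φ y| / ‖x - y‖ ^ ((N:ℝ) + 2*s))

theorem gagliardoForm_le_gagliardoSq_mul {N : ℕ} {s : ℝ} {v φ : EuclideanSpace ℝ (Fin N) → ℝ}
    (hv : Measurable v) (hφ : Measurable φ) (U : Set (EuclideanSpace ℝ (Fin N))) :
    gagliardoForm N s v φ U ≤
      gagliardoSq N s v U ^ (1/2 : ℝ) * gagliardoSq N s φ U ^ (1/2 : ℝ) := by
  set p : ℝ := (N:ℝ) + 2*s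
  set ν := (volume.restrict U).prod (volume.restrict U)
  let D (w : EuclideanSpace ℝ (Fin N) → ℝ)
      (z : EuclideanSpace ℝ (Fin N) × EuclideanSpace ℝ (Fin N)) : ℝ :=
    (w z.1 - w z.2) / √(‖z.1 - z.2‖ ^ p)
  have hk : ∀ x y : EuclideanSpace ℝ (Fin N), 0 ≤ ‖x - y‖ ^ p := fun x y => by positivity
  have hcross : ∫⁻ x in U, ∫⁻ y in U, ENNReal.ofReal (|v x - v y| * |φ x - φ y| / ‖x - y‖ ^ p) =
      ∫⁻ z, ENNReal.ofReal (|D v z| * |D φ z|) ∂ν := by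
    rw [lintegral_prod _ (by fun_prop)]
    refine lintegral_congr fun x => lintegral_congr fun y => ?_
    rw [abs_div, abs_div, abs_of_nonneg (Real.sqrt_nonneg _), div_mul_div_comm,
      Real.mul_self_sqrt (hk x y)]
  have hsq : ∀ w : EuclideanSpace ℝ (Fin N) → ℝ, Measurable w →
      ∫⁻ x in U, ∫⁻ y in U, ENNReal.ofReal (|w x - w y| ^ 2 / ‖x - y‖ ^ p) =
        ∫⁻ z, ENNReal.ofReal (|D w z| ^ 2) ∂ν := by
    intro w hw
    rw [lintegral_prod _ (by fun_prop)]
    refine lintegral_congr fun x => lintegral_congr fun y => ?_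
    rw [abs_div, abs_of_nonneg (Real.sqrt_nonneg _), div_pow, Real.sq_sqrt (hk x y)]
  rw [gagliardoForm, gagliardoSq, gagliardoSq, hcross, hsq v hv, hsq φ hφ,
    ← ENNReal.mul_rpow_half_mul_rpow_half]
  exact mul_le_mul_right (lintegral_ofReal_abs_mul_le_L2_mul_L2 ν (by fun_prop) (by fun_prop)) _

theorem half_lintegral_lintegral_le_gagliardoForm_add {N : ℕ} {s : ℝ}
    {v φ : EuclideanSpace ℝ (Fin N) → ℝ} {S T : Set (EuclideanSpace ℝ (Fin N))}
    (hv : Measurable v) (hφ : Measurable φ) (hS : MeasurableSet S) (hT : MeasurableSet T)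
    (hTS : T ⊆ S) (hφT : ∀ x ∉ T, φ x = 0) :
    (1/2 : ℝ≥0∞) *
        ∫⁻ x, ∫⁻ y, ENNReal.ofReal (|v x - v y| * |φ x - φ y| / ‖x - y‖ ^ ((N:ℝ) + 2*s)) ≤
      gagliardoForm N s v φ S + ∫⁻ x in T, ∫⁻ y in Sᶜ,
        ENNReal.ofReal (|v x - v y| * |φ x - φ y| / ‖x - y‖ ^ ((N:ℝ) + 2*s)) := by
  have hsplit := lintegral_lintegral_le_of_symm (μ := volume)
    (f := fun x y => ENNReal.ofReal (|v x - v y| * |φ x - φ y| / ‖x - y‖ ^ ((N:ℝ) + 2*s)))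
    (by fun_prop) (fun x y => by rw [abs_sub_comm (v x), abs_sub_comm (φ x), norm_sub_rev])
    hS hT hTS (fun x hx y hy => by simp [hφT x hx, hφT y hy])
  refine (mul_le_mul_right hsplit _).trans_eq ?_
  rw [gagliardoForm, mul_add, ← mul_assoc, one_div,
    ENNReal.inv_mul_cancel two_ne_zero ENNReal.ofNat_ne_top, one_mul]

theorem stmt3_general (N : ℕ) (s : ℝ) (hs : s ∈ Set.Ioo (0:ℝ) 1)
    (Ω' Ω'' Ω : Set (EuclideanSpace ℝ (Fin N)))
    (hΩ'o : IsOpen Ω') (hΩ''o : IsOpen Ω'')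
    (hΩb : Bornology.IsBounded Ω)
    (h1 : closure Ω' ⊆ Ω'') (h2 : closure Ω'' ⊆ Ω) :
    ∃ c₁ c₂ : ℝ≥0∞, 0 < c₁ ∧ c₁ < ⊤ ∧ 0 < c₂ ∧ c₂ < ⊤ ∧
      ∀ v φ : EuclideanSpace ℝ (Fin N) → ℝ, Measurable v → Measurable φ →
        gagliardoSq N s v Ω'' < ⊤ →
        (∫⁻ x, ENNReal.ofReal (|v x| / (1 + ‖x‖ ^ ((N:ℝ) + 2*s)))) < ⊤ →
        MemLp v 2 (volume.restrict Ω') →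
        tsupport φ ⊆ Ω' →
        gagliardoSq N s φ Ω'' < ⊤ →
        MemLp φ 2 (volume.restrict Ω') →
        (1/2 : ℝ≥0∞) * (∫⁻ x, ∫⁻ y,
            ENNReal.ofReal (|v x - v y| * |φ x - φ y| / ‖x - y‖ ^ ((N:ℝ) + 2*s)))
          ≤ (gagliardoSq N s v Ω'') ^ (1/2 : ℝ) * (gagliardoSq N s φ Ω'') ^ (1/2 : ℝ)
            + c₁ * (∫⁻ x in Ω', ENNReal.ofReal (|v x| ^ 2)) ^ (1/2 : ℝ)
                 * (∫⁻ x in Ω', ENNReal.ofReal (|φ x| ^ 2)) ^ (1/2 : ℝ)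
            + c₂ * (∫⁻ x in Ω', ENNReal.ofReal |φ x|)
                 * (∫⁻ x, ENNReal.ofReal (|v x| / (1 + ‖x‖ ^ ((N:ℝ) + 2*s)))) := by
  set p : ℝ := (N:ℝ) + 2*s
  have hp : (finrank ℝ (EuclideanSpace ℝ (Fin N)) : ℝ) < p := by
    rw [finrank_euclideanSpace_fin]; linarith [hs.1]
  have hp0 : 0 < p := (Nat.cast_nonneg _).trans_lt hp
  have hΩ' : Ω' ⊆ Ω'' := subset_closure.trans h1
  have hbdd : Bornology.IsBounded Ω' := hΩb.subset (hΩ'.trans (subset_closure.trans h2))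
  obtain ⟨δ, hδ, hsep⟩ :=
    exists_pos_forall_le_dist_of_closure_subset hbdd.isCompact_closure hΩ''o h1
  obtain ⟨R, hR⟩ := isBounded_iff_forall_norm_le.1 hbdd
  set K := ∫⁻ z in (ball (0 : EuclideanSpace ℝ (Fin N)) δ)ᶜ, ENNReal.ofReal (1 / ‖z‖ ^ p)
  set C := ENNReal.ofReal (δ ^ (-p) + (R / δ + 1) ^ p)
  have hK : K < ⊤ := lintegral_compl_ball_one_div_rpow_lt_top hδ hp
  refine ⟨K + 1, C + 1, by positivity, by finiteness, by positivity, by finiteness, ?_⟩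
  intro v φ hv hφ _ _ _ hsupp _ _
  have hφ0 : ∀ y ∉ Ω', φ y = 0 := fun y hy =>
    image_eq_zero_of_notMem_tsupport fun h => hy (hsupp h)
  calc (1/2 : ℝ≥0∞) * (∫⁻ x, ∫⁻ y, ENNReal.ofReal (|v x - v y| * |φ x - φ y| / ‖x - y‖ ^ p))
      ≤ gagliardoForm N s v φ Ω'' +
          ∫⁻ x in Ω', ∫⁻ y in Ω''ᶜ, ENNReal.ofReal (|v x - v y| * |φ x - φ y| / ‖x - y‖ ^ p) :=
        half_lintegral_lintegral_le_gagliardoForm_add hv hφ hΩ''o.measurableSet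
          hΩ'o.measurableSet hΩ' hφ0
    _ ≤ gagliardoSq N s v Ω'' ^ (1/2 : ℝ) * gagliardoSq N s φ Ω'' ^ (1/2 : ℝ) +
          (K * (∫⁻ x in Ω', ENNReal.ofReal (|v x| * |φ x|)) +
            C * (∫⁻ x in Ω', ENNReal.ofReal |φ x|) *
              ∫⁻ y, ENNReal.ofReal (|v y| / (1 + ‖y‖ ^ p))) :=
        add_le_add (gagliardoForm_le_gagliardoSq_mul hv hφ Ω'')
          (lintegral_lintegral_compl_cross_le hp0 hδ hR
            (fun x hx y hy => (hsep x hx y hy).trans_eq (dist_eq_norm x y)) hv hφ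
            fun y hy => hφ0 y fun h => hy (hΩ' h))
    _ ≤ _ := by
        have hHolder := lintegral_ofReal_abs_mul_le_L2_mul_L2 (volume.restrict Ω')
          hv.aemeasurable hφ.aemeasurable
        rw [← add_assoc, mul_assoc (K + 1)]
        gcongr
        exacts [le_self_add, le_self_add]

theorem stmt3 (N : ℕ) (hN : 1 ≤ N) (s : ℝ) (hs : s ∈ Set.Ioo (0:ℝ) 1)
    (Ω' Ω'' Ω : Set (EuclideanSpace ℝ (Fin N)))
    (hΩ'o : IsOpen Ω') (hΩ''o : IsOpen Ω'') (hΩo : IsOpen Ω)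
    (hΩb : Bornology.IsBounded Ω)
    (h1 : closure Ω' ⊆ Ω'') (h2 : closure Ω'' ⊆ Ω) :
    ∃ c₁ c₂ : ℝ≥0∞, 0 < c₁ ∧ c₁ < ⊤ ∧ 0 < c₂ ∧ c₂ < ⊤ ∧
      ∀ v φ : EuclideanSpace ℝ (Fin N) → ℝ, Measurable v → Measurable φ →
        gagliardoSq N s v Ω'' < ⊤ →
        (∫⁻ x, ENNReal.ofReal (|v x| / (1 + ‖x‖ ^ ((N:ℝ) + 2*s)))) < ⊤ →
        MemLp v 2 (volume.restrict Ω') →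
        tsupport φ ⊆ Ω' →
        gagliardoSq N s φ Ω'' < ⊤ →
        MemLp φ 2 (volume.restrict Ω') →
        (1/2 : ℝ≥0∞) * (∫⁻ x, ∫⁻ y,
            ENNReal.ofReal (|v x - v y| * |φ x - φ y| / ‖x - y‖ ^ ((N:ℝ) + 2*s)))
          ≤ (gagliardoSq N s v Ω'') ^ (1/2 : ℝ) * (gagliardoSq N s φ Ω'') ^ (1/2 : ℝ)
            + c₁ * (∫⁻ x in Ω', ENNReal.ofReal (|v x| ^ 2)) ^ (1/2 : ℝ)
                 * (∫⁻ x in Ω', ENNReal.ofReal (|φ x| ^ 2)) ^ (1/2 : ℝ)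
            + c₂ * (∫⁻ x in Ω', ENNReal.ofReal |φ x|)
                 * (∫⁻ x, ENNReal.ofReal (|v x| / (1 + ‖x‖ ^ ((N:ℝ) + 2*s)))) :=
  stmt3_general N s hs Ω' Ω'' Ω hΩ'o hΩ''o hΩb h1 h2
end
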